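/- For any finite sequence of real numbers p₀, p₁, …, p_{k+1} one has the discrete chain-rule inequality: Σ_{n=0}^{k} (S(p_{n+1}) − S(p_n))·p_{n+1} ≥ B(S(p_{k+1})) − B(S(p₀)). -/

import Mathlib

open MeasureTheory
open scoped Classical

/-- Pseudo-inverse of a non-decreasing function `S`. -/
noncomputable def pseudoInv (S : ℝ → ℝ) (q : ℝ) : ℝ :=
  if S 0 < q then sInf {z : ℝ | S z = q}
  else if q = S 0 then 0
  else sSup {z : ℝ | S z = q}

/-- The extended-real-valued function `B` associated with `S`. -/
noncomputable def Bfun (S : ℝ → ℝ) (q : ℝ) : EReal :=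
  if q ∈ Set.range S then ((∫ τ in (S 0)..q, pseudoInv S τ) : ℝ) else ⊤

/-!
For continuous monotone `S`, the level sets of `S` are closed intervals, so `pseudoInv S` picks a
point of the level set: `S (pseudoInv S q) = q` on the range of `S`. Monotonicity of `S` then
gives `pseudoInv S τ < b` for `τ < S b` and `b < pseudoInv S τ` for `S b < τ`, hence the one-step
bound `∫_{S a}^{S b} pseudoInv S ≤ (S b - S a) * b`. Summing these steps, the left-hand side
telescopes to `B(S(p_{k+1})) - B(S(p₀))`.
-/

section PseudoInv

variable {S : ℝ → ℝ}

theorem apply_pseudoInv (hS : Monotone S) (hc : Continuous S) {q : ℝ} (hq : q ∈ Set.range S) :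
    S (pseudoInv S q) = q := by
  have hclosed : IsClosed {z : ℝ | S z = q} := isClosed_eq hc continuous_const
  have hne : {z : ℝ | S z = q}.Nonempty := hq
  unfold pseudoInv
  split_ifs with hpos hzero
  · refine hclosed.csInf_mem hne ⟨0, fun z hz => ?_⟩
    exact (hS.reflect_lt (hpos.trans_eq hz.symm)).le
  · exact hzero.symm
  · refine hclosed.csSup_mem hne ⟨0, fun z hz => ?_⟩
    have hneg : q < S 0 := lt_of_le_of_ne (not_lt.1 hpos) hzero
    exact (hS.reflect_lt (hz.trans_lt hneg)).le

theorem pseudoInv_lt_of_lt_apply (hS : Monotone S) (hc : Continuous S) {τ b : ℝ}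
    (hτ : τ ∈ Set.range S) (h : τ < S b) : pseudoInv S τ < b :=
  hS.reflect_lt ((apply_pseudoInv hS hc hτ).trans_lt h)

theorem lt_pseudoInv_of_apply_lt (hS : Monotone S) (hc : Continuous S) {τ b : ℝ}
    (hτ : τ ∈ Set.range S) (h : S b < τ) : b < pseudoInv S τ :=
  hS.reflect_lt (h.trans_eq (apply_pseudoInv hS hc hτ).symm)

theorem monotoneOn_pseudoInv (hS : Monotone S) (hc : Continuous S) :
    MonotoneOn (pseudoInv S) (Set.range S) := by
  intro q₁ hq₁ q₂ hq₂ hle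
  rcases hle.eq_or_lt with rfl | hlt
  · exact le_rfl
  · exact (pseudoInv_lt_of_lt_apply hS hc hq₁
      (hlt.trans_eq (apply_pseudoInv hS hc hq₂).symm)).le

theorem uIcc_apply_subset_range (hc : Continuous S) (a b : ℝ) :
    Set.uIcc (S a) (S b) ⊆ Set.range S := fun _ hτ =>
  let ⟨z, _, hz⟩ := intermediate_value_uIcc hc.continuousOn hτ
  ⟨z, hz⟩

theorem intervalIntegrable_pseudoInv (hS : Monotone S) (hc : Continuous S) (a b : ℝ) :
    IntervalIntegrable (pseudoInv S) volume (S a) (S b) :=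
  ((monotoneOn_pseudoInv hS hc).mono (uIcc_apply_subset_range hc a b)).intervalIntegrable

theorem integral_pseudoInv_le (hS : Monotone S) (hc : Continuous S) (a b : ℝ) :
    ∫ τ in (S a)..(S b), pseudoInv S τ ≤ (S b - S a) * b := by
  rcases le_total (S a) (S b) with hab | hba
  · calc ∫ τ in (S a)..(S b), pseudoInv S τ ≤ ∫ _ in (S a)..(S b), b := by
          refine intervalIntegral.integral_mono_on_of_le_Ioo hab
            (intervalIntegrable_pseudoInv hS hc a b) intervalIntegrable_const fun τ hτ => ?_
          have hτ' := uIcc_apply_subset_range hc a b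
            (Set.Icc_subset_uIcc (Set.Ioo_subset_Icc_self hτ))
          exact (pseudoInv_lt_of_lt_apply hS hc hτ' hτ.2).le
      _ = (S b - S a) * b := by rw [intervalIntegral.integral_const, smul_eq_mul]
  · have hlower : (S a - S b) * b ≤ ∫ τ in (S b)..(S a), pseudoInv S τ :=
      calc (S a - S b) * b = ∫ _ in (S b)..(S a), b := by
            rw [intervalIntegral.integral_const, smul_eq_mul]
        _ ≤ ∫ τ in (S b)..(S a), pseudoInv S τ := by
          refine intervalIntegral.integral_mono_on_of_le_Ioo hba intervalIntegrable_const
            (intervalIntegrable_pseudoInv hS hc b a) fun τ hτ => ?_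
          have hτ' := uIcc_apply_subset_range hc a b
            (Set.Icc_subset_uIcc' (Set.Ioo_subset_Icc_self hτ))
          exact (lt_pseudoInv_of_apply_lt hS hc hτ' hτ.1).le
    rw [intervalIntegral.integral_symm]
    linarith

end PseudoInv

theorem Bfun_apply (S : ℝ → ℝ) (x : ℝ) :
    Bfun S (S x) = ((∫ τ in (S 0)..(S x), pseudoInv S τ : ℝ) : EReal) :=
  if_pos ⟨x, rfl⟩

/-- Discrete chain-rule inequality: for any finite sequence `p₀, …, p_{k+1}`,
`Σ_{n=0}^{k} (S(p_{n+1}) − S(p_n))·p_{n+1} ≥ B(S(p_{k+1})) − B(S(p₀))`. -/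
theorem Bfun_discrete_chain_rule (S : ℝ → ℝ) (L : NNReal)
    (hmono : Monotone S) (hlip : LipschitzWith L S) (k : ℕ) (p : ℕ → ℝ) :
    Bfun S (S (p (k + 1))) - Bfun S (S (p 0)) ≤
      ((∑ n ∈ Finset.range (k + 1), (S (p (n + 1)) - S (p n)) * p (n + 1) : ℝ) : EReal) := by
  have hc : Continuous S := hlip.continuous
  rw [Bfun_apply, Bfun_apply, ← EReal.coe_sub, EReal.coe_le_coe_iff,
    ← Finset.sum_range_sub (fun n => ∫ τ in (S 0)..(S (p n)), pseudoInv S τ)]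
  refine Finset.sum_le_sum fun n _ => ?_
  rw [intervalIntegral.integral_interval_sub_left (intervalIntegrable_pseudoInv hmono hc 0 _)
    (intervalIntegrable_pseudoInv hmono hc 0 _)]
  exact integral_pseudoInv_le hmono hc (p n) (p (n + 1))
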